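/- arXiv:1205.0953 — 4 statements merged into one kernel-verified Lean document; each statement's English description precedes it below -/
import Mathlib

section
/- Let X be an n×p real matrix with p > n whose columns X_1,…,X_p are in general linear position. If 0 lies in the convex hull of {X_1,…,X_p}, then the convex cone generated by the columns satisfies cone{X_1,…,X_p} = ℝⁿ; consequently, for every y ∈ ℝⁿ the minimum of (1/n)‖y − Xβ‖₂² over β ⪰ 0 equals 0. -/
/-! Write `0 = ∑ j, w j • X_j` with `w` a probability vector. The relation `w` is nontrivial, so by
general position its support has more than `n` elements and hence contains `n` columns forming a
basis of `ℝⁿ`. Every `v` is a combination of these, and adding a large multiple of `w` makes all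
coefficients nonnegative. -/

open Matrix Finset

noncomputable section

/-- Squared Euclidean norm of a vector. -/
def sqNorm {n : ℕ} (v : Fin n → ℝ) : ℝ := ∑ i, (v i) ^ 2

/-- The columns of `X` are in general linear position: every collection of `min n p`
of them is linearly independent. -/
def GLP {n p : ℕ} (X : Matrix (Fin n) (Fin p) ℝ) : Prop :=
  ∀ J : Finset (Fin p), J.card = min n p →
    LinearIndependent ℝ (fun j : {x // x ∈ J} => fun i => X i j.1)

section

variable {M ι : Type*} [AddCommGroup M] [Fintype ι] {x : ι → M}

lemma lt_card_filter_ne_zero_of_sum_smul_eq_zero {R : Type*} [Ring R] [DecidableEq R] [Module R M]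
    {n : ℕ} (hli : ∀ J : Finset ι, #J = n → LinearIndependent R (fun j : J => x j))
    (hn : n ≤ Fintype.card ι) {w : ι → R} (hw : w ≠ 0) (hwx : ∑ j, w j • x j = 0) :
    n < #{j | w j ≠ 0} := by
  by_contra! hle
  obtain ⟨J, hsuppJ, -, hJ⟩ :=
    Finset.exists_subsuperset_card_eq (Finset.subset_univ _) hle (by simpa using hn)
  have hw_out : ∀ j ∉ J, w j = 0 := fun j hj => by
    by_contra hwj
    exact hj (hsuppJ (by simpa using hwj))
  have hJx : ∑ j : J, w j • x j = 0 := by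
    rw [Finset.sum_coe_sort J (fun j => w j • x j), ← hwx]
    exact Finset.sum_subset J.subset_univ fun j _ hj => by rw [hw_out j hj, zero_smul]
  have hw_in := Fintype.linearIndependent_iff.1 (hli J hJ) (fun j => w j) hJx
  refine hw (funext fun j => ?_)
  by_cases hj : j ∈ J
  exacts [hw_in ⟨j, hj⟩, hw_out j hj]

variable {𝕜 : Type*} [Field 𝕜] [LinearOrder 𝕜] [IsStrictOrderedRing 𝕜] [Module 𝕜 M]

lemma exists_sum_smul_eq_of_mem_convexHull_range {z : M} (hz : z ∈ convexHull 𝕜 (Set.range x)) :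
    ∃ w : ι → 𝕜, (∀ j, 0 ≤ w j) ∧ ∑ j, w j = 1 ∧ ∑ j, w j • x j = z := by
  rw [convexHull_range_eq_exists_affineCombination] at hz
  obtain ⟨s, w, hw₀, hw₁, rfl⟩ := hz
  have hw₁' : ∑ j, Set.indicator (↑s) w j = 1 := by
    rwa [Finset.sum_indicator_subset _ s.subset_univ]
  refine ⟨Set.indicator (↑s) w, fun j => ?_, hw₁', ?_⟩
  · by_cases hj : j ∈ s
    · simpa [hj] using hw₀ j hj
    · simp [hj]
  · rw [s.affineCombination_indicator_subset w x s.subset_univ,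
      Finset.affineCombination_eq_linear_combination _ _ _ hw₁']

lemma exists_nonneg_sum_smul_eq_sum_smul {w : ι → 𝕜} (hw : ∀ j, 0 ≤ w j)
    (hwx : ∑ j, w j • x j = 0) {s : Finset ι} (hs : ∀ j ∈ s, w j ≠ 0) (c : ι → 𝕜) :
    ∃ β : ι → 𝕜, (∀ j, 0 ≤ β j) ∧ ∑ j, β j • x j = ∑ j ∈ s, c j • x j := by
  classical
  set t := ∑ j ∈ s, |c j| / w j
  have ht : 0 ≤ t := Finset.sum_nonneg fun j _ => div_nonneg (abs_nonneg _) (hw j)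
  refine ⟨fun j => (if j ∈ s then c j else 0) + t * w j, fun j => ?_, ?_⟩
  · by_cases hj : j ∈ s
    · have hwj : 0 < w j := (hw j).lt_of_ne' (hs j hj)
      have hcj : |c j| ≤ t * w j := (div_le_iff₀ hwj).1 <|
        Finset.single_le_sum (fun i _ => div_nonneg (abs_nonneg (c i)) (hw i)) hj
      simp only [hj, if_true]
      linarith [neg_abs_le (c j)]
    · simpa [hj] using mul_nonneg ht (hw j)
  · simp only [add_smul, ite_smul, zero_smul, Finset.sum_add_distrib, Finset.sum_ite_mem,
      Finset.univ_inter, mul_smul, ← Finset.smul_sum, hwx, smul_zero, add_zero]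

theorem exists_nonneg_sum_smul_eq_of_zero_mem_convexHull [FiniteDimensional 𝕜 M]
    (hli : ∀ J : Finset ι, #J = Module.finrank 𝕜 M → LinearIndependent 𝕜 (fun j : J => x j))
    (hcard : Module.finrank 𝕜 M ≤ Fintype.card ι) (h0 : 0 ∈ convexHull 𝕜 (Set.range x))
    (v : M) : ∃ β : ι → 𝕜, (∀ j, 0 ≤ β j) ∧ ∑ j, β j • x j = v := by
  obtain ⟨w, hw₀, hw₁, hwx⟩ := exists_sum_smul_eq_of_mem_convexHull_range h0
  have hw : w ≠ 0 := fun h => by simp [h] at hw₁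
  obtain ⟨S, hS, hScard⟩ := Finset.exists_subset_card_eq
    (lt_card_filter_ne_zero_of_sum_smul_eq_zero hli hcard hw hwx).le
  have hspan : Submodule.span 𝕜 (x '' S) = ⊤ := by
    rw [Set.image_eq_range]
    exact (hli S hScard).span_eq_top_of_card_eq_finrank' (by simpa using hScard)
  have hv : v ∈ Submodule.span 𝕜 (x '' S) := hspan ▸ Submodule.mem_top
  obtain ⟨c, rfl⟩ := (Submodule.mem_span_image_finset_iff_exists_fun' 𝕜).1 hv
  exact exists_nonneg_sum_smul_eq_sum_smul hw₀ hwx (fun j hj => (Finset.mem_filter.1 (hS hj)).2) c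

end

lemma mulVec_eq_sum_smul_col {n p : ℕ} (X : Matrix (Fin n) (Fin p) ℝ) (β : Fin p → ℝ) :
    X *ᵥ β = ∑ j, β j • fun i => X i j := by
  simp only [mulVec_eq_sum, op_smul_eq_smul]
  rfl

/-- if `p > n`, the columns of `X` are in general linear position and
`0` lies in the convex hull of the columns, then the cone generated by the columns is
all of ℝⁿ, and consequently for every `y` the minimum of `(1/n)‖y − Xβ‖₂²` over
`β ⪰ 0` equals `0`. -/
theorem stmt_0 (n p : ℕ) (hnp : n < p) (X : Matrix (Fin n) (Fin p) ℝ)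
    (hglp : GLP X)
    (h0 : (0 : Fin n → ℝ) ∈ convexHull ℝ (Set.range fun j => fun i => X i j)) :
    {v : Fin n → ℝ | ∃ β : Fin p → ℝ, (∀ j, 0 ≤ β j) ∧ v = X.mulVec β} = Set.univ ∧
    ∀ y : Fin n → ℝ,
      IsLeast ((fun β : Fin p → ℝ => (1 / (n : ℝ)) * sqNorm (y - X.mulVec β)) ''
        {β | ∀ j, 0 ≤ β j}) 0 := by
  have hfinrank : Module.finrank ℝ (Fin n → ℝ) = min n p := by simp [hnp.le]
  have cone (v : Fin n → ℝ) : ∃ β : Fin p → ℝ, (∀ j, 0 ≤ β j) ∧ v = X *ᵥ β := by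
    obtain ⟨β, hβ, hv⟩ := exists_nonneg_sum_smul_eq_of_zero_mem_convexHull
      (fun J hJ => hglp J (hJ.trans hfinrank)) (by simpa using hnp.le) h0 v
    exact ⟨β, hβ, by rw [mulVec_eq_sum_smul_col, hv]⟩
  refine ⟨Set.eq_univ_of_forall cone, fun y => ⟨?_, ?_⟩⟩
  · obtain ⟨β, hβ, hy⟩ := cone y
    exact ⟨β, hβ, by simp [sqNorm, ← hy]⟩
  · rintro _ ⟨β, -, rfl⟩
    exact mul_nonneg (by positivity) (Finset.sum_nonneg fun i _ => sq_nonneg _)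
end
end

section
/- Let X ∈ ℝ^{n×p} and define τ₀ = max{τ : ∃ w ∈ ℝⁿ with ‖w‖₂ ≤ 1 such that Xᵀw/√n ⪰ τ·1}. Then τ₀² = min_{λ ∈ T^{p−1}} λᵀΣλ = min_{λ ∈ T^{p−1}} (1/n)‖Xλ‖₂², where Σ = XᵀX/n; geometrically, τ₀ equals the Euclidean distance from the origin to the convex hull of the columns of X/√n. -/
/-!
Let `K` be the convex hull of the columns of `X/√n` and `v` its point of least norm, which
satisfies `‖v‖² ≤ ⟪v, u⟫` for all `u ∈ K`. The unit vector along `v` then has margin `‖v‖`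
against every column. Conversely, if `‖w‖ ≤ 1` and `τ ≤ ⟪w, c_j⟫` for all columns, the
half-space `{u | τ ≤ ⟪w, u⟫}` contains `K`, so `τ ≤ ⟪w, v⟫ ≤ ‖v‖`. Hence `τ₀ = ‖v‖`, and the
simplex formulation is the same minimisation because `λ ↦ Xλ/√n` maps the simplex onto `K`.
-/

open Matrix Finset

noncomputable section

open scoped RealInnerProductSpace

section MarginDuality

variable {E ι : Type*} [NormedAddCommGroup E] [InnerProductSpace ℝ E]

/-- For the columns `c` of `X/√n`, the paper's `τ₀` is the maximum of this set. -/
def marginSet (c : ι → E) : Set ℝ := {τ | ∃ w : E, ‖w‖ ≤ 1 ∧ ∀ j, τ ≤ ⟪w, c j⟫}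

theorem norm_sq_le_inner_of_isMinOn {K : Set E} (hK : Convex ℝ K) {v u : E} (hv : v ∈ K)
    (hmin : IsMinOn norm K v) (hu : u ∈ K) : ‖v‖ ^ 2 ≤ ⟪v, u⟫ := by
  have : Nonempty K := ⟨⟨v, hv⟩⟩
  have hinf : ‖0 - v‖ = ⨅ w : K, ‖0 - (w : E)‖ := by
    simp only [zero_sub, norm_neg]
    exact le_antisymm (le_ciInf fun w => hmin w.2)
      (ciInf_le (show BddBelow (Set.range fun w : K => ‖(w : E)‖) from
        ⟨0, Set.forall_mem_range.2 fun w => norm_nonneg _⟩) ⟨v, hv⟩)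
  have := (norm_eq_iInf_iff_real_inner_le_zero hK hv).1 hinf u hu
  rw [zero_sub, inner_neg_left, inner_sub_right, real_inner_self_eq_norm_sq] at this
  linarith

theorem le_inner_of_mem_convexHull {c : ι → E} {w u : E} {τ : ℝ} (h : ∀ j, τ ≤ ⟪w, c j⟫)
    (hu : u ∈ convexHull ℝ (Set.range c)) : τ ≤ ⟪w, u⟫ :=
  convexHull_min (t := {u | τ ≤ ⟪w, u⟫}) (Set.range_subset_iff.2 h)
    (convex_halfSpace_ge (innerₛₗ ℝ w).isLinear τ) hu

theorem IsMinOn.isGreatest_marginSet {c : ι → E} {v : E} (hv : v ∈ convexHull ℝ (Set.range c))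
    (hmin : IsMinOn norm (convexHull ℝ (Set.range c)) v) : IsGreatest (marginSet c) ‖v‖ := by
  refine ⟨⟨‖v‖⁻¹ • v, ?_, fun j => ?_⟩, ?_⟩
  · rw [norm_smul, norm_inv, norm_norm]
    exact inv_mul_le_one_of_le₀ le_rfl (norm_nonneg v)
  · have hvc := norm_sq_le_inner_of_isMinOn (convex_convexHull ℝ _) hv hmin
      (subset_convexHull ℝ _ (Set.mem_range_self j))
    calc ‖v‖ = ‖v‖⁻¹ * ‖v‖ ^ 2 := by
          rcases eq_or_ne ‖v‖ 0 with h | h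
          · simp [h]
          · field_simp
      _ ≤ ‖v‖⁻¹ * ⟪v, c j⟫ := by gcongr
      _ = ⟪‖v‖⁻¹ • v, c j⟫ := (real_inner_smul_left _ _ _).symm
  · rintro τ ⟨w, hw, hτ⟩
    calc τ ≤ ⟪w, v⟫ := le_inner_of_mem_convexHull hτ hv
      _ ≤ ‖w‖ * ‖v‖ := real_inner_le_norm w v
      _ ≤ ‖v‖ := mul_le_of_le_one_left (norm_nonneg v) hw

theorem exists_isMinOn_norm_convexHull [Finite ι] [Nonempty ι] (c : ι → E) :
    ∃ v ∈ convexHull ℝ (Set.range c), IsMinOn norm (convexHull ℝ (Set.range c)) v :=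
  ((Set.finite_range c).isCompact_convexHull (𝕜 := ℝ)).exists_isMinOn
    (Set.range_nonempty c).convexHull continuous_norm.continuousOn

theorem isLeast_norm_convexHull_of_isGreatest_marginSet [Finite ι] {c : ι → E} {τ : ℝ}
    (hτ : IsGreatest (marginSet c) τ) : IsLeast (norm '' convexHull ℝ (Set.range c)) τ := by
  have : Nonempty ι := by
    by_contra h
    rw [not_nonempty_iff] at h
    exact (lt_add_one τ).not_ge (hτ.2 ⟨0, by simp, isEmptyElim⟩)
  obtain ⟨v, hv, hmin⟩ := exists_isMinOn_norm_convexHull c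
  rw [hτ.unique (hmin.isGreatest_marginSet hv)]
  exact ⟨⟨v, hv, rfl⟩, by rintro _ ⟨u, hu, rfl⟩; exact hmin hu⟩

end MarginDuality

theorem LinearMap.image_stdSimplex {R E ι : Type*} [Field R] [LinearOrder R] [IsStrictOrderedRing R]
    [AddCommGroup E] [Module R E] [Fintype ι] [DecidableEq ι] (f : (ι → R) →ₗ[R] E) :
    f '' stdSimplex R ι = convexHull R (Set.range fun i => f (Pi.single i 1)) := by
  rw [← convexHull_rangle_single_eq_stdSimplex R ι, f.image_convexHull, ← Set.range_comp]
  rfl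

theorem dotProduct_transpose_mul_self_mulVec {R m k : Type*} [CommSemiring R] [Fintype m]
    [Fintype k] (X : Matrix m k R) (l : k → R) : l ⬝ᵥ (Xᵀ * X) *ᵥ l = X *ᵥ l ⬝ᵥ X *ᵥ l := by
  rw [← mulVec_mulVec, dotProduct_mulVec, vecMul_transpose]

section sqNorm

variable {n : ℕ}

theorem sqNorm_nonneg (v : Fin n → ℝ) : 0 ≤ sqNorm v :=
  Finset.sum_nonneg fun _ _ => sq_nonneg _

theorem sqNorm_eq_dotProduct_self (v : Fin n → ℝ) : sqNorm v = v ⬝ᵥ v := by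
  simp only [sqNorm, dotProduct, sq]

theorem sqNorm_smul (a : ℝ) (v : Fin n → ℝ) : sqNorm (a • v) = a ^ 2 * sqNorm v := by
  simp only [sqNorm, Pi.smul_apply, smul_eq_mul, mul_pow, Finset.mul_sum]

theorem sqNorm_eq_norm_toLp_sq (v : Fin n → ℝ) : sqNorm v = ‖WithLp.toLp 2 v‖ ^ 2 := by
  rw [EuclideanSpace.real_norm_sq_eq]
  rfl

theorem sqrt_sqNorm (v : Fin n → ℝ) : √(sqNorm v) = ‖WithLp.toLp 2 v‖ := by
  rw [sqNorm_eq_norm_toLp_sq, Real.sqrt_sq (norm_nonneg _)]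

theorem sqNorm_le_one_iff (v : Fin n → ℝ) : sqNorm v ≤ 1 ↔ ‖WithLp.toLp 2 v‖ ≤ 1 := by
  rw [sqNorm_eq_norm_toLp_sq, sq_le_one_iff₀ (norm_nonneg _)]

theorem isLeast_sqNorm_of_isLeast_sqrt_sqNorm {K : Set (Fin n → ℝ)} {τ : ℝ}
    (h : IsLeast {d | ∃ v ∈ K, d = √(sqNorm v)} τ) :
    IsLeast {d | ∃ v ∈ K, d = sqNorm v} (τ ^ 2) := by
  obtain ⟨⟨v, hv, rfl⟩, hle⟩ := h
  refine ⟨⟨v, hv, Real.sq_sqrt (sqNorm_nonneg v)⟩, ?_⟩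
  rintro _ ⟨u, hu, rfl⟩
  rw [Real.sq_sqrt (sqNorm_nonneg v)]
  exact (Real.sqrt_le_sqrt_iff (sqNorm_nonneg u)).1 (hle ⟨u, hu, rfl⟩)

theorem image_norm_convexHull_toLp {ι : Type*} (c : ι → Fin n → ℝ) :
    norm '' convexHull ℝ (Set.range fun j => WithLp.toLp 2 (c j) : Set (EuclideanSpace ℝ (Fin n))) =
      {d | ∃ v ∈ convexHull ℝ (Set.range c), d = √(sqNorm v)} := by
  let e : (Fin n → ℝ) →ₗ[ℝ] EuclideanSpace ℝ (Fin n) :=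
    (WithLp.linearEquiv 2 ℝ (Fin n → ℝ)).symm.toLinearMap
  rw [show (Set.range fun j => WithLp.toLp 2 (c j)) = e '' Set.range c from
    Set.range_comp e c, ← e.image_convexHull, Set.image_image]
  ext d
  simp [e, sqrt_sqNorm, eq_comm]

end sqNorm

section Columns

variable {n p : ℕ} (X : Matrix (Fin n) (Fin p) ℝ)

theorem marginSet_toLp_scaledColumns :
    marginSet (fun j => (WithLp.toLp 2 fun i => X i j / √n : EuclideanSpace ℝ (Fin n))) =
      {τ | ∃ w : Fin n → ℝ, sqNorm w ≤ 1 ∧ ∀ j, τ ≤ (Xᵀ *ᵥ w) j / √n} := by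
  have hinner (w : Fin n → ℝ) (j : Fin p) :
      ⟪WithLp.toLp 2 w, (WithLp.toLp 2 fun i => X i j / √n : EuclideanSpace ℝ (Fin n))⟫ =
        (Xᵀ *ᵥ w) j / √n := by
    simp only [PiLp.inner_apply, Real.inner_apply, mulVec, dotProduct, transpose_apply,
      Finset.sum_div]
    exact Finset.sum_congr rfl fun i _ => by ring
  ext τ
  constructor
  · rintro ⟨w, hw, hτ⟩
    refine ⟨WithLp.ofLp w, (sqNorm_le_one_iff _).2 hw, fun j => ?_⟩
    rw [← hinner]
    exact hτ j
  · rintro ⟨w, hw, hτ⟩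
    refine ⟨WithLp.toLp 2 w, (sqNorm_le_one_iff _).1 hw, fun j => ?_⟩
    rw [hinner]
    exact hτ j

theorem convexHull_scaledColumns :
    convexHull ℝ (Set.range fun j i => X i j / √n) =
      (fun l => (1 / √n) • (X *ᵥ l)) '' stdSimplex ℝ (Fin p) := by
  classical
  rw [show (fun l => (1 / √n) • (X *ᵥ l)) = ⇑((1 / √n) • X.mulVecLin) from rfl,
    LinearMap.image_stdSimplex]
  congr! with j i
  simp [div_eq_inv_mul]

end Columns

theorem stmt_2_general (n p : ℕ) (X : Matrix (Fin n) (Fin p) ℝ)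
    (τ0 : ℝ)
    (hτ0 : IsGreatest {τ : ℝ | ∃ w : Fin n → ℝ, sqNorm w ≤ 1 ∧
      ∀ j, τ ≤ (X.transpose.mulVec w) j / Real.sqrt n} τ0) :
    IsLeast {v : ℝ | ∃ l ∈ stdSimplex ℝ (Fin p),
        v = l ⬝ᵥ ((1 / (n : ℝ)) • (X.transpose * X)).mulVec l} (τ0 ^ 2) ∧
    (∀ l : Fin p → ℝ, l ⬝ᵥ ((1 / (n : ℝ)) • (X.transpose * X)).mulVec l
        = (1 / (n : ℝ)) * sqNorm (X.mulVec l)) ∧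
    IsLeast {d : ℝ | ∃ v ∈ convexHull ℝ
        (Set.range fun j => fun i => X i j / Real.sqrt n),
      d = Real.sqrt (sqNorm v)} τ0 := by
  have hdist : IsLeast {d : ℝ | ∃ v ∈ convexHull ℝ (Set.range fun j i => X i j / √n),
      d = √(sqNorm v)} τ0 := by
    rw [← image_norm_convexHull_toLp]
    exact isLeast_norm_convexHull_of_isGreatest_marginSet (by rwa [marginSet_toLp_scaledColumns])
  have hquad (l : Fin p → ℝ) : l ⬝ᵥ ((1 / (n : ℝ)) • (Xᵀ * X)) *ᵥ l
      = (1 / (n : ℝ)) * sqNorm (X *ᵥ l) := by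
    rw [smul_mulVec, dotProduct_smul, dotProduct_transpose_mul_self_mulVec,
      sqNorm_eq_dotProduct_self, smul_eq_mul]
  refine ⟨?_, hquad, hdist⟩
  have hscale (l : Fin p → ℝ) : (1 / (n : ℝ)) * sqNorm (X *ᵥ l) = sqNorm ((1 / √n) • (X *ᵥ l)) := by
    rw [sqNorm_smul, div_pow, one_pow, Real.sq_sqrt n.cast_nonneg]
  convert isLeast_sqNorm_of_isLeast_sqrt_sqNorm hdist using 1
  rw [convexHull_scaledColumns]
  ext d
  simp only [Set.mem_ofPred_eq, Set.exists_mem_image, hquad, hscale]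

/-- if `τ₀ = max{τ : ∃ w, ‖w‖₂ ≤ 1, Xᵀw/√n ⪰ τ·1}`, then
`τ₀² = min_{λ ∈ T^{p−1}} λᵀΣλ = min_{λ ∈ T^{p−1}} (1/n)‖Xλ‖₂²` with `Σ = XᵀX/n`,
and `τ₀` is the distance from the origin to the convex hull of the columns of `X/√n`. -/
theorem stmt_2 (n p : ℕ) (hn : 0 < n) (hp : 0 < p) (X : Matrix (Fin n) (Fin p) ℝ)
    (τ0 : ℝ)
    (hτ0 : IsGreatest {τ : ℝ | ∃ w : Fin n → ℝ, sqNorm w ≤ 1 ∧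
      ∀ j, τ ≤ (X.transpose.mulVec w) j / Real.sqrt n} τ0) :
    IsLeast {v : ℝ | ∃ l ∈ stdSimplex ℝ (Fin p),
        v = l ⬝ᵥ ((1 / (n : ℝ)) • (X.transpose * X)).mulVec l} (τ0 ^ 2) ∧
    (∀ l : Fin p → ℝ, l ⬝ᵥ ((1 / (n : ℝ)) • (X.transpose * X)).mulVec l
        = (1 / (n : ℝ)) * sqNorm (X.mulVec l)) ∧
    IsLeast {d : ℝ | ∃ v ∈ convexHull ℝ
        (Set.range fun j => fun i => X i j / Real.sqrt n),
      d = Real.sqrt (sqNorm v)} τ0 :=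
  stmt_2_general n p X τ0 hτ0
end
end

section
/- Let Σ = (1−ρ)I + ρ11ᵀ ∈ ℝ^{p×p} with ρ ∈ (0,1). Then (i) min_{λ ∈ T^{p−1}} λᵀΣλ = ρ + (1−ρ)/p; and (ii) for any nonempty S ⊂ {1,…,p} with |S| = s < p, min over λ ∈ T^{p−s−1} of λᵀ(Σ_{S^cS^c} − Σ_{S^cS}Σ_{SS}^{−1}Σ_{SS^c})λ equals ρ(1−ρ)/(1 + (s−1)ρ) + (1−ρ)/(p−s). -/
/-!
Σ and all its principal submatrices have the form `αI + c𝟙𝟙ᵀ` (compound symmetry). This family is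
closed under products, so the inverse of such a matrix (Sherman–Morrison) and the Schur complement
`Σ_{SᶜSᶜ} - Σ_{SᶜS} Σ_{SS}⁻¹ Σ_{SSᶜ}` belong to it again, the latter with `α = 1 - ρ` and
`c = ρ(1 - ρ)/(1 + (s - 1)ρ)`. On the simplex `λᵀ(αI + c𝟙𝟙ᵀ)λ = α‖λ‖² + c`, and Cauchy–Schwarz gives
`‖λ‖² ≥ 1/n` with equality at the barycentre.
-/

open Matrix Finset

noncomputable section

section CompoundSymmetry

variable {ι 𝕜 : Type*} [DecidableEq ι]

def compoundSymmetry [CommRing 𝕜] (α c : 𝕜) : Matrix ι ι 𝕜 :=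
  α • 1 + Matrix.of fun _ _ => c

section CommRing

variable [CommRing 𝕜]

theorem compoundSymmetry_apply (α c : 𝕜) (i j : ι) :
    compoundSymmetry α c i j = if i = j then α + c else c := by
  by_cases h : i = j <;> simp [compoundSymmetry, h]

theorem compoundSymmetry_apply_of_ne {i j : ι} (h : i ≠ j) (α c : 𝕜) :
    compoundSymmetry α c i j = c := by
  rw [compoundSymmetry_apply, if_neg h]

theorem submatrix_compoundSymmetry {κ : Type*} [DecidableEq κ] {f : κ → ι}
    (hf : Function.Injective f) (α c : 𝕜) :
    (compoundSymmetry α c).submatrix f f = compoundSymmetry α c := by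
  ext i j
  simp [compoundSymmetry_apply, hf.eq_iff]

variable [Fintype ι]

theorem compoundSymmetry_mulVec (α c : 𝕜) (v : ι → 𝕜) :
    compoundSymmetry α c *ᵥ v = α • v + fun _ => c * ∑ i, v i := by
  rw [compoundSymmetry, add_mulVec, smul_mulVec, one_mulVec]
  ext i
  simp [mulVec, dotProduct, mul_sum]

theorem dotProduct_compoundSymmetry_mulVec (α c : 𝕜) (u v : ι → 𝕜) :
    u ⬝ᵥ compoundSymmetry α c *ᵥ v = α * (u ⬝ᵥ v) + c * (∑ i, u i) * ∑ i, v i := by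
  simp only [compoundSymmetry_mulVec, dotProduct_add, dotProduct_smul, smul_eq_mul]
  simp [dotProduct, mul_sum, mul_comm, mul_left_comm]

theorem compoundSymmetry_mul (α c β d : 𝕜) :
    compoundSymmetry α c * compoundSymmetry β d =
      (compoundSymmetry (α * β) (α * d + β * c + Fintype.card ι * c * d) : Matrix ι ι 𝕜) := by
  ext i j
  simp only [compoundSymmetry, Matrix.mul_apply, Matrix.add_apply, Matrix.smul_apply, one_apply,
    smul_eq_mul, mul_ite, mul_one, mul_zero, of_apply, mul_add, add_mul, ite_mul, zero_mul,
    sum_add_distrib, sum_ite_eq', mem_univ, ↓reduceIte, sum_ite_eq, sum_const, card_univ,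
    nsmul_eq_mul]
  ring

end CommRing

theorem inv_compoundSymmetry [Fintype ι] [Field 𝕜] {α c : 𝕜} (hα : α ≠ 0)
    (hαc : α + Fintype.card ι * c ≠ 0) :
    (compoundSymmetry α c : Matrix ι ι 𝕜)⁻¹ =
      compoundSymmetry α⁻¹ (-c / (α * (α + Fintype.card ι * c))) := by
  refine Matrix.inv_eq_right_inv ?_
  have hoff : α * (-c / (α * (α + Fintype.card ι * c))) + α⁻¹ * c +
      Fintype.card ι * c * (-c / (α * (α + Fintype.card ι * c))) = 0 := by
    rw [mul_comm (Fintype.card ι : 𝕜) c] at hαc ⊢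
    field_simp
    ring
  rw [compoundSymmetry_mul, mul_inv_cancel₀ hα, hoff]
  ext i j
  simp [compoundSymmetry_apply, one_apply]

end CompoundSymmetry

section StdSimplex

variable {ι 𝕜 : Type*} [Fintype ι] [Nonempty ι] [Field 𝕜] [LinearOrder 𝕜] [IsStrictOrderedRing 𝕜]

theorem const_inv_card_mem_stdSimplex : (fun _ => (Fintype.card ι : 𝕜)⁻¹) ∈ stdSimplex 𝕜 ι := by
  refine ⟨fun _ => by positivity, ?_⟩
  simp [sum_const, card_univ]

theorem inv_card_le_dotProduct_self_of_sum_eq_one {l : ι → 𝕜} (hl : ∑ i, l i = 1) :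
    (Fintype.card ι : 𝕜)⁻¹ ≤ l ⬝ᵥ l := by
  have hcs : (∑ i, l i) ^ 2 ≤ Fintype.card ι * ∑ i, l i ^ 2 := sq_sum_le_card_mul_sum_sq
  rw [hl, one_pow] at hcs
  rw [inv_le_iff_one_le_mul₀' (by positivity)]
  simpa [dotProduct, sq] using hcs

theorem isLeast_dotProduct_compoundSymmetry_mulVec_stdSimplex [DecidableEq ι] {α : 𝕜}
    (hα : 0 ≤ α) (c : 𝕜) :
    IsLeast {v | ∃ l ∈ stdSimplex 𝕜 ι, v = l ⬝ᵥ compoundSymmetry α c *ᵥ l}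
      (α / Fintype.card ι + c) := by
  have value {l : ι → 𝕜} (hl : l ∈ stdSimplex 𝕜 ι) :
      l ⬝ᵥ compoundSymmetry α c *ᵥ l = α * (l ⬝ᵥ l) + c := by
    rw [dotProduct_compoundSymmetry_mulVec, hl.2, mul_one, mul_one]
  constructor
  · refine ⟨_, const_inv_card_mem_stdSimplex, ?_⟩
    rw [value const_inv_card_mem_stdSimplex]
    simp [dotProduct, sum_const, card_univ, div_eq_mul_inv]
  · rintro v ⟨l, hl, rfl⟩
    rw [value hl, div_eq_mul_inv]
    gcongr
    exact inv_card_le_dotProduct_self_of_sum_eq_one hl.2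

end StdSimplex

section Schur

variable {ι 𝕜 : Type*} [Fintype ι] [DecidableEq ι] [Field 𝕜]

def schurComplement (A : Matrix ι ι 𝕜) (S : Finset ι) : Matrix {x // x ∈ Sᶜ} {x // x ∈ Sᶜ} 𝕜 :=
  of fun a b => A a.1 b.1 - (fun k : {x // x ∈ S} => A a.1 k.1) ⬝ᵥ
    (A.submatrix (fun k : {x // x ∈ S} => k.1) (fun k : {x // x ∈ S} => k.1))⁻¹ *ᵥ
      fun k : {x // x ∈ S} => A k.1 b.1

theorem schurComplement_compoundSymmetry (S : Finset ι) {α c : 𝕜} (hα : α ≠ 0)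
    (hαc : α + #S * c ≠ 0) :
    schurComplement (compoundSymmetry α c) S = compoundSymmetry α (α * c / (α + #S * c)) := by
  have hcard : (Fintype.card {x // x ∈ S} : 𝕜) = #S := by rw [Fintype.card_coe]
  have hinv : ((compoundSymmetry α c).submatrix (fun k : {x // x ∈ S} => k.1) fun k => k.1)⁻¹ =
      compoundSymmetry α⁻¹ (-c / (α * (α + #S * c))) := by
    rw [submatrix_compoundSymmetry Subtype.val_injective, inv_compoundSymmetry hα (hcard ▸ hαc),
      hcard]
  ext a b
  have hne {k : {x // x ∈ S}} {a : {x // x ∈ Sᶜ}} : k.1 ≠ a.1 :=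
    ne_of_mem_of_not_mem k.2 (mem_compl.1 a.2)
  have hrow : (fun k : {x // x ∈ S} => compoundSymmetry α c a.1 k.1) = fun _ => c :=
    funext fun k => compoundSymmetry_apply_of_ne hne.symm α c
  have hcol : (fun k : {x // x ∈ S} => compoundSymmetry α c k.1 b.1) = fun _ => c :=
    funext fun k => compoundSymmetry_apply_of_ne hne α c
  rw [schurComplement, of_apply, hrow, hcol, hinv, dotProduct_compoundSymmetry_mulVec]
  simp only [dotProduct, sum_const, card_univ, hcard, nsmul_eq_mul, compoundSymmetry_apply,
    ← Subtype.ext_iff]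
  have hoff : c - (α⁻¹ * (#S * (c * c)) + -c / (α * (α + #S * c)) * (#S * c) * (#S * c)) =
      α * c / (α + #S * c) := by
    rw [mul_comm (#S : 𝕜) c] at hαc ⊢
    field_simp
    ring
  split_ifs <;> linear_combination hoff

end Schur

/-- for the equi-correlation matrix Σ = (1−ρ)I + ρ11ᵀ with ρ ∈ (0,1):
(i) the minimum of λᵀΣλ over the standard simplex equals ρ + (1−ρ)/p, and
(ii) for any nonempty S with |S| = s < p, the minimum over the simplex in ℝ^{p−s} of
λᵀ(Σ_{S^cS^c} − Σ_{S^cS}Σ_{SS}⁻¹Σ_{SS^c})λ equals ρ(1−ρ)/(1+(s−1)ρ) + (1−ρ)/(p−s). -/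
theorem stmt_18 (p : ℕ) (hp : 0 < p) (ρ : ℝ) (hρ0 : 0 < ρ) (hρ1 : ρ < 1)
    (Sig : Matrix (Fin p) (Fin p) ℝ)
    (hSig : ∀ j k, Sig j k = if j = k then 1 else ρ) :
    IsLeast {v : ℝ | ∃ l ∈ stdSimplex ℝ (Fin p), v = l ⬝ᵥ Sig.mulVec l}
      (ρ + (1 - ρ) / p) ∧
    ∀ (S : Finset (Fin p)), S.Nonempty → ∀ s : ℕ, S.card = s → s < p →
      IsLeast {v : ℝ | ∃ l : {x // x ∈ Sᶜ} → ℝ, (∀ a, 0 ≤ l a) ∧ (∑ a, l a) = 1 ∧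
          v = l ⬝ᵥ (Matrix.of fun a b : {x // x ∈ Sᶜ} =>
            Sig a.1 b.1 - (fun c : {x // x ∈ S} => Sig a.1 c.1) ⬝ᵥ
              ((Sig.submatrix (fun c : {x // x ∈ S} => c.1)
                  (fun c : {x // x ∈ S} => c.1))⁻¹.mulVec
                (fun c : {x // x ∈ S} => Sig c.1 b.1))).mulVec l}
        (ρ * (1 - ρ) / (1 + ((s : ℝ) - 1) * ρ) + (1 - ρ) / ((p : ℝ) - s)) := by
  obtain rfl : Sig = (compoundSymmetry (1 - ρ) ρ : Matrix (Fin p) (Fin p) ℝ) := by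
    ext j k
    rw [hSig, compoundSymmetry_apply]
    split_ifs <;> ring
  have hα : 0 < 1 - ρ := sub_pos.2 hρ1
  refine ⟨?_, fun S _ s hs hsp => ?_⟩
  · have : Nonempty (Fin p) := Fin.pos_iff_nonempty.1 hp
    simpa only [Fintype.card_fin, add_comm] using
      isLeast_dotProduct_compoundSymmetry_mulVec_stdSimplex (ι := Fin p) hα.le ρ
  · subst hs
    have : Nonempty {x // x ∈ Sᶜ} := by
      refine Finset.Nonempty.coe_sort (card_pos.1 ?_)
      rw [card_compl, Fintype.card_fin]
      omega
    have hcard : (Fintype.card {x // x ∈ Sᶜ} : ℝ) = p - #S := by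
      rw [Fintype.card_coe, card_compl, Fintype.card_fin, Nat.cast_sub hsp.le]
    have hschur : schurComplement (compoundSymmetry (1 - ρ) ρ) S =
        compoundSymmetry (1 - ρ) (ρ * (1 - ρ) / (1 + (#S - 1) * ρ)) := by
      rw [schurComplement_compoundSymmetry S hα.ne' (by positivity)]
      ring_nf
    have h := isLeast_dotProduct_compoundSymmetry_mulVec_stdSimplex (ι := {x // x ∈ Sᶜ}) hα.le
      (ρ * (1 - ρ) / (1 + (#S - 1) * ρ))
    rw [← hschur, hcard, add_comm] at h
    simp only [stdSimplex, Set.mem_ofPred_eq, and_assoc] at h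
    exact h
end
end

section
/- Let Σ ∈ ℝ^{p×p} be a symmetric positive semidefinite matrix all of whose entries are non-negative, and suppose {1,…,p} is partitioned into blocks B_1,…,B_K such that every entry of each principal submatrix Σ_{B_l B_l} is at least σ₀ > 0. Then min_{λ ∈ T^{p−1}} λᵀΣλ ≥ σ₀/K; in particular, if all entries of Σ are at least σ₀, then min_{λ ∈ T^{p−1}} λᵀΣλ ≥ σ₀. -/
open Matrix Finset

noncomputable section

/-- if Σ is symmetric positive semidefinite with non-negative entries
and {1,…,p} is partitioned into blocks B_1,…,B_K on each of which all entries of the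
corresponding principal submatrix are at least σ₀ > 0, then
min_{λ ∈ T^{p−1}} λᵀΣλ ≥ σ₀/K; in particular, if all entries of Σ are at least σ₀,
then min_{λ ∈ T^{p−1}} λᵀΣλ ≥ σ₀. -/
theorem stmt_19 (p K : ℕ) (hp : 0 < p) (hK : 0 < K)
    (Sig : Matrix (Fin p) (Fin p) ℝ) (hpsd : Sig.PosSemidef)
    (hnonneg : ∀ j k, 0 ≤ Sig j k)
    (σ0 : ℝ) (hσ0 : 0 < σ0)
    (B : Fin K → Finset (Fin p))
    (hdisj : ∀ l m : Fin K, l ≠ m → Disjoint (B l) (B m))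
    (hcover : ∀ j : Fin p, ∃ l, j ∈ B l)
    (hblock : ∀ (l : Fin K), ∀ j ∈ B l, ∀ k ∈ B l, σ0 ≤ Sig j k) :
    (∀ lam ∈ stdSimplex ℝ (Fin p), σ0 / K ≤ lam ⬝ᵥ Sig.mulVec lam) ∧
    ((∀ j k, σ0 ≤ Sig j k) → ∀ lam ∈ stdSimplex ℝ (Fin p), σ0 ≤ lam ⬝ᵥ Sig.mulVec lam) := by
  have hquad : ∀ lam : Fin p → ℝ,
      lam ⬝ᵥ Sig.mulVec lam = ∑ j, ∑ k, lam j * Sig j k * lam k := by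
    intro lam
    simp [dotProduct, Matrix.mulVec, Finset.mul_sum, mul_assoc]
  have key : ∀ lam ∈ stdSimplex ℝ (Fin p), σ0 / K ≤ lam ⬝ᵥ Sig.mulVec lam := by
    intro lam hlam
    obtain ⟨hlnn, hlsum⟩ := hlam
    set s : Fin K → ℝ := fun l => ∑ j ∈ B l, lam j with hs
    have hunion : Finset.univ.biUnion B = Finset.univ := by
      apply Finset.eq_univ_iff_forall.2
      intro j
      obtain ⟨l, hl⟩ := hcover j
      exact Finset.mem_biUnion.2 ⟨l, Finset.mem_univ l, hl⟩
    have hdisj' : ∀ l ∈ Finset.univ, ∀ m ∈ Finset.univ, l ≠ m →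
        Disjoint (B l) (B m) := fun l _ m _ h => hdisj l m h
    have hssum : ∑ l, s l = 1 := by
      rw [hs]
      rw [← Finset.sum_biUnion hdisj', hunion, hlsum]
    -- step 1: quadratic form ≥ sum over blocks
    have hd2 : ∀ l ∈ (Finset.univ : Finset (Fin K)), ∀ m ∈ Finset.univ, l ≠ m →
        Disjoint (B l ×ˢ B l) (B m ×ˢ B m) := by
      intro l _ m _ hlm
      rw [Finset.disjoint_left]
      rintro ⟨a, b⟩ hab hab'
      rw [Finset.mem_product] at hab hab'
      exact (Finset.disjoint_left.1 (hdisj l m hlm)) hab.1 hab'.1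
    have h1 : ∑ l, ∑ j ∈ B l, ∑ k ∈ B l, lam j * Sig j k * lam k
        ≤ lam ⬝ᵥ Sig.mulVec lam := by
      rw [hquad lam]
      calc ∑ l, ∑ j ∈ B l, ∑ k ∈ B l, lam j * Sig j k * lam k
          = ∑ l, ∑ x ∈ B l ×ˢ B l, lam x.1 * Sig x.1 x.2 * lam x.2 := by
            simp [Finset.sum_product]
        _ = ∑ x ∈ Finset.univ.biUnion (fun l => B l ×ˢ B l),
              lam x.1 * Sig x.1 x.2 * lam x.2 := (Finset.sum_biUnion hd2).symm
        _ ≤ ∑ x ∈ (Finset.univ : Finset (Fin p)) ×ˢ Finset.univ,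
              lam x.1 * Sig x.1 x.2 * lam x.2 := by
            apply Finset.sum_le_sum_of_subset_of_nonneg
            · intro x _; simp
            · intro x _ _
              exact mul_nonneg (mul_nonneg (hlnn _) (hnonneg _ _)) (hlnn _)
        _ = ∑ j, ∑ k, lam j * Sig j k * lam k := by
            rw [Finset.sum_product]
    -- step 2: each block sum ≥ σ0 * (s l)^2
    have h2 : ∀ l, σ0 * (s l) ^ 2 ≤ ∑ j ∈ B l, ∑ k ∈ B l, lam j * Sig j k * lam k := by
      intro l
      have : σ0 * (s l) ^ 2 = ∑ j ∈ B l, ∑ k ∈ B l, lam j * σ0 * lam k := by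
        simp only [← Finset.sum_mul, ← Finset.mul_sum]
        ring
      rw [this]
      apply Finset.sum_le_sum
      intro j hj
      apply Finset.sum_le_sum
      intro k hk
      exact mul_le_mul_of_nonneg_right
        (mul_le_mul_of_nonneg_left (hblock l j hj k hk) (hlnn j)) (hlnn k)
    -- combine with Cauchy-Schwarz
    have hcs : (1 : ℝ) ≤ (K : ℝ) * ∑ l, (s l) ^ 2 := by
      have := sq_sum_le_card_mul_sum_sq (s := (Finset.univ : Finset (Fin K))) (f := s)
      rw [hssum] at this
      simpa using this
    have hKpos : (0 : ℝ) < K := by exact_mod_cast hK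
    have : σ0 / K ≤ σ0 * ∑ l, (s l) ^ 2 := by
      rw [div_le_iff₀ hKpos]
      calc σ0 = σ0 * 1 := by ring
        _ ≤ σ0 * ((K : ℝ) * ∑ l, (s l) ^ 2) := by
            exact mul_le_mul_of_nonneg_left hcs hσ0.le
        _ = σ0 * (∑ l, (s l) ^ 2) * K := by ring
    calc σ0 / K ≤ σ0 * ∑ l, (s l) ^ 2 := this
      _ = ∑ l, σ0 * (s l) ^ 2 := by rw [Finset.mul_sum]
      _ ≤ ∑ l, ∑ j ∈ B l, ∑ k ∈ B l, lam j * Sig j k * lam k :=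
          Finset.sum_le_sum fun l _ => h2 l
      _ ≤ lam ⬝ᵥ Sig.mulVec lam := h1
  refine ⟨key, ?_⟩
  intro hall lam hlam
  obtain ⟨hlnn, hlsum⟩ := hlam
  have : σ0 = σ0 * (∑ j, lam j) * (∑ k, lam k) := by rw [hlsum]; ring
  rw [hquad lam, this]
  calc σ0 * (∑ j, lam j) * (∑ k, lam k)
      = ∑ j, ∑ k, lam j * σ0 * lam k := by
        rw [mul_assoc, Finset.sum_mul_sum, Finset.mul_sum]
        apply Finset.sum_congr rfl; intro j _
        rw [Finset.mul_sum]
        apply Finset.sum_congr rfl; intro k _; ring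
    _ ≤ ∑ j, ∑ k, lam j * Sig j k * lam k := by
        apply Finset.sum_le_sum; intro j _
        apply Finset.sum_le_sum; intro k _
        exact mul_le_mul_of_nonneg_right
          (mul_le_mul_of_nonneg_left (hall j k) (hlnn j)) (hlnn k)
end
end
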